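/- Sets defined by N-Σ^p_α formulas coincide with the boldface Σ⁰_α sets of the Scott topology on 2^ω: for every countable ordinal α ≥ 1, a subset X ⊆ 2^ω is Σ⁰_α in Selivanov's Borel hierarchy for the Scott topology if and only if X = {D ∈ 2^ω : (ℕ, D) ⊨ φ} for some quantifier-free N-Σ^p_α formula φ, and dually for Π⁰_α and N-Π^p_α. -/

import Mathlib

namespace LE

/-- Quantifier-free positive infinitary formulas in the language of arithmetic
with one extra unary predicate `D` ("N-formulas"): atoms are `⊤`, `⊥` and
`D(n)`, with finite and countable positive connectives. -/
inductive NForm : Type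
  | verum : NForm
  | falsum : NForm
  | dAtom (n : ℕ) : NForm
  | ndAtom (n : ℕ) : NForm
  | fconj (l : List ℕ) : NForm
  | fdisj (l : List ℕ) : NForm
  | cand (φ ψ : NForm) : NForm
  | cor (φ ψ : NForm) : NForm
  | disj (f : ℕ → NForm) : NForm
  | conj (f : ℕ → NForm) : NForm

namespace NForm

/-- The formal negation operator on positive formulas. -/
def neg : NForm → NForm
  | verum => falsum
  | falsum => verum
  | dAtom n => ndAtom n
  | ndAtom n => dAtom n
  | fconj l => fdisj l
  | fdisj l => fconj l
  | cand φ ψ => cor φ.neg ψ.neg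
  | cor φ ψ => cand φ.neg ψ.neg
  | disj f => conj fun i => (f i).neg
  | conj f => disj fun i => (f i).neg

end NForm

/-- Satisfaction of an N-formula in the standard model `(ℕ, D)`. -/
def NSat (D : Set ℕ) : NForm → Prop
  | .verum => True
  | .falsum => False
  | .dAtom n => n ∈ D
  | .ndAtom n => n ∉ D
  | .fconj l => ∀ n ∈ l, n ∈ D
  | .fdisj l => ∃ n ∈ l, n ∉ D
  | .cand φ ψ => NSat D φ ∧ NSat D ψ
  | .cor φ ψ => NSat D φ ∨ NSat D ψ
  | .disj f => ∃ i, NSat D (f i)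
  | .conj f => ∀ i, NSat D (f i)

mutual
  /-- The `N-Σ^p_α` hierarchy of N-formulas. -/
  inductive NSigma : Ordinal → NForm → Prop
    | verum : NSigma 0 .verum
    | falsum : NSigma 0 .falsum
    | dAtom (n : ℕ) : NSigma 0 (.dAtom n)
    | fconj (l : List ℕ) : NSigma 0 (.fconj l)
    | one (f : ℕ → NForm) : (∀ i, NSigma 0 (f i)) → NSigma 1 (.disj f)
    | ge2a (α : Ordinal) (β : ℕ → Ordinal) (φ ψ : ℕ → NForm) :
        2 ≤ α → (∀ i, β i < α) →
        (∀ i, NSigma (β i) (φ i)) → (∀ i, NPi (β i) (ψ i)) →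
        NSigma α (.disj fun i => .cand (φ i) (ψ i))
    | ge2b (α : Ordinal) (β : ℕ → Ordinal) (φ ψ : ℕ → NForm) :
        2 ≤ α → (∀ i, β i < α) →
        (∀ i, NPi (β i) (φ i)) → (∀ i, NSigma (β i) (ψ i)) →
        NSigma α (.disj fun i => .cand (φ i) (ψ i))

  /-- The `N-Π^p_α` hierarchy of N-formulas. -/
  inductive NPi : Ordinal → NForm → Prop
    | verum : NPi 0 .verum
    | falsum : NPi 0 .falsum
    | ndAtom (n : ℕ) : NPi 0 (.ndAtom n)
    | fdisj (l : List ℕ) : NPi 0 (.fdisj l)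
    | one (f : ℕ → NForm) : (∀ i, NPi 0 (f i)) → NPi 1 (.conj f)
    | ge2a (α : Ordinal) (β : ℕ → Ordinal) (φ ψ : ℕ → NForm) :
        2 ≤ α → (∀ i, β i < α) →
        (∀ i, NSigma (β i) (φ i)) → (∀ i, NPi (β i) (ψ i)) →
        NPi α (.conj fun i => .cor (φ i) (ψ i))
    | ge2b (α : Ordinal) (β : ℕ → Ordinal) (φ ψ : ℕ → NForm) :
        2 ≤ α → (∀ i, β i < α) →
        (∀ i, NPi (β i) (φ i)) → (∀ i, NSigma (β i) (ψ i)) →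
        NPi α (.conj fun i => .cor (φ i) (ψ i))
end

end LE

namespace LE

/-- Scott-open subsets of `(2^ω, ⊆)` (points are subsets of `ω`): upper sets
meeting every directed set whose supremum (union) lies in them. -/
def ScottOpen2 (U : Set (Set ℕ)) : Prop :=
  (∀ X Y : Set ℕ, X ∈ U → X ⊆ Y → Y ∈ U) ∧
  ∀ D : Set (Set ℕ), D.Nonempty → DirectedOn (· ⊆ ·) D → ⋃₀ D ∈ U →
    (D ∩ U).Nonempty

/-- Selivanov's Borel hierarchy for the Scott topology on `2^ω`:
`Σ⁰_1` is the topology, and for `α > 1` the `Σ⁰_α` sets are countable unions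
of differences of sets from lower levels. -/
inductive SelSigma : Ordinal → Set (Set ℕ) → Prop
  | base (U : Set (Set ℕ)) : ScottOpen2 U → SelSigma 1 U
  | step (α : Ordinal) (β : ℕ → Ordinal) (B B' : ℕ → Set (Set ℕ)) :
      1 < α → (∀ i, β i < α) →
      (∀ i, SelSigma (β i) (B i)) → (∀ i, SelSigma (β i) (B' i)) →
      SelSigma α (⋃ i, B i \ B' i)


open NForm in
theorem sat_neg (φ : NForm) : ∀ D : Set ℕ, NSat D φ.neg ↔ ¬ NSat D φ := by
  induction φ <;> intro D <;>
    simp [NForm.neg, NSat, not_and_or, not_forall, not_exists, *] <;> tauto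

/-- auxiliary directedness fact -/
theorem directed_list (l : List ℕ) (D : Set (Set ℕ)) (hne : D.Nonempty)
    (hdir : DirectedOn (· ⊆ ·) D) (hU : ∀ n ∈ l, n ∈ ⋃₀ D) :
    ∃ S ∈ D, ∀ n ∈ l, n ∈ S := by
  induction l with
  | nil => obtain ⟨S, hS⟩ := hne; exact ⟨S, hS, by simp⟩
  | cons a l ih =>
    obtain ⟨S, hSD, hSl⟩ := ih fun n hn => hU n (List.mem_cons_of_mem a hn)
    obtain ⟨T, hTD, haT⟩ := hU a List.mem_cons_self
    obtain ⟨R, hRD, hSR, hTR⟩ := hdir S hSD T hTD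
    refine ⟨R, hRD, fun n hn => ?_⟩
    rcases List.mem_cons.1 hn with h | h
    · exact hTR (h ▸ haT)
    · exact hSR (hSl n h)

theorem scottOpen_fconj (l : List ℕ) : ScottOpen2 {D | ∀ n ∈ l, n ∈ D} := by
  constructor
  · intro X Y hX hXY n hn; exact hXY (hX n hn)
  · intro D hne hdir hU
    obtain ⟨S, hS, hSl⟩ := directed_list l D hne hdir hU
    exact ⟨S, hS, hSl⟩

theorem scottOpen_iUnion {U : ℕ → Set (Set ℕ)} (h : ∀ i, ScottOpen2 (U i)) :
    ScottOpen2 (⋃ i, U i) := by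
  constructor
  · rintro X Y hX hXY
    rw [Set.mem_iUnion] at hX ⊢
    obtain ⟨i, hi⟩ := hX
    exact ⟨i, (h i).1 X Y hi hXY⟩
  · intro D hne hdir hU
    rw [Set.mem_iUnion] at hU
    obtain ⟨i, hi⟩ := hU
    obtain ⟨S, hS, hSU⟩ := (h i).2 D hne hdir hi
    exact ⟨S, hS, Set.mem_iUnion.2 ⟨i, hSU⟩⟩

theorem scottOpen_empty : ScottOpen2 (∅ : Set (Set ℕ)) := by
  constructor
  · intro X Y hX _; exact hX.elim
  · intro D _ _ hU; exact hU.elim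

theorem scottOpen_univ : ScottOpen2 (Set.univ : Set (Set ℕ)) := by
  constructor
  · intro _ _ _ _; trivial
  · intro D hne _ _; exact ⟨hne.choose, hne.choose_spec, trivial⟩

theorem selSigma_one_open {U : Set (Set ℕ)} (h : SelSigma 1 U) : ScottOpen2 U := by
  cases h with
  | base U hU => exact hU
  | step α β B B' h1 => exact absurd h1 (lt_irrefl 1)

theorem scott_finite_sub {U : Set (Set ℕ)} (hU : ScottOpen2 U) {X : Set ℕ}
    (hX : X ∈ U) : ∃ l : List ℕ, (∀ n ∈ l, n ∈ X) ∧ {D | ∀ n ∈ l, n ∈ D} ⊆ U := by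
  have hne : ({S | S ⊆ X ∧ S.Finite} : Set (Set ℕ)).Nonempty := ⟨∅, by simp⟩
  have hdir : DirectedOn (· ⊆ ·) {S | S ⊆ X ∧ S.Finite} := fun S hS T hT =>
    ⟨S ∪ T, ⟨Set.union_subset hS.1 hT.1, hS.2.union hT.2⟩,
      Set.subset_union_left, Set.subset_union_right⟩
  have hsup : ⋃₀ {S | S ⊆ X ∧ S.Finite} = X := by
    apply subset_antisymm
    · exact Set.sUnion_subset fun S hS => hS.1
    · intro x hx; exact ⟨{x}, ⟨by simpa using hx, Set.finite_singleton x⟩, rfl⟩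
  obtain ⟨S, ⟨hSX, hSfin⟩, hSU⟩ := hU.2 _ hne hdir (by rw [hsup]; exact hX)
  obtain ⟨s, rfl⟩ := hSfin.exists_finset_coe
  refine ⟨s.toList, fun n hn => hSX (by simpa using hn), fun D hD => ?_⟩
  exact hU.1 _ D hSU fun x hx => hD x (by simpa using hx)

theorem one_lt_of_two_le {α : Ordinal} (h : 2 ≤ α) : 1 < α :=
  lt_of_lt_of_le one_lt_two h

theorem two_le_of_one_lt {α : Ordinal} (h : 1 < α) : 2 ≤ α := by
  have := Order.succ_le_of_lt h
  rwa [← Ordinal.add_one_eq_succ, one_add_one_eq_two] at this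

theorem sup_one_eq {α : Ordinal} (h : 2 ≤ α) : α ⊔ 1 = α :=
  sup_eq_left.mpr ((one_lt_of_two_le h).le)

/-- Formal negation sends `N-Σ` to `N-Π`. -/
theorem nsigma_neg {α : Ordinal} {φ : NForm} (h : NSigma α φ) : NPi α φ.neg := by
  refine NSigma.rec (motive_1 := fun α φ _ => NPi α φ.neg)
    (motive_2 := fun α φ _ => NSigma α φ.neg)
    ?_ ?_ ?_ ?_ ?_ ?_ ?_ ?_ ?_ ?_ ?_ ?_ ?_ ?_ h
  · exact NPi.falsum
  · exact NPi.verum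
  · exact fun n => NPi.ndAtom n
  · exact fun l => NPi.fdisj l
  · exact fun f _ ih => NPi.one _ ih
  · exact fun α β φ ψ h2 hβ _ _ ih1 ih2 => NPi.ge2b α β _ _ h2 hβ ih1 ih2
  · exact fun α β φ ψ h2 hβ _ _ ih1 ih2 => NPi.ge2a α β _ _ h2 hβ ih1 ih2
  · exact NSigma.falsum
  · exact NSigma.verum
  · exact fun n => NSigma.dAtom n
  · exact fun l => NSigma.fconj l
  · exact fun f _ ih => NSigma.one _ ih
  · exact fun α β φ ψ h2 hβ _ _ ih1 ih2 => NSigma.ge2b α β _ _ h2 hβ ih1 ih2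
  · exact fun α β φ ψ h2 hβ _ _ ih1 ih2 => NSigma.ge2a α β _ _ h2 hβ ih1 ih2

/-- Formal negation sends `N-Π` to `N-Σ`. -/
theorem npi_neg {α : Ordinal} {φ : NForm} (h : NPi α φ) : NSigma α φ.neg := by
  refine NPi.rec (motive_1 := fun α φ _ => NPi α φ.neg)
    (motive_2 := fun α φ _ => NSigma α φ.neg)
    ?_ ?_ ?_ ?_ ?_ ?_ ?_ ?_ ?_ ?_ ?_ ?_ ?_ ?_ h
  · exact NPi.falsum
  · exact NPi.verum
  · exact fun n => NPi.ndAtom n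
  · exact fun l => NPi.fdisj l
  · exact fun f _ ih => NPi.one _ ih
  · exact fun α β φ ψ h2 hβ _ _ ih1 ih2 => NPi.ge2b α β _ _ h2 hβ ih1 ih2
  · exact fun α β φ ψ h2 hβ _ _ ih1 ih2 => NPi.ge2a α β _ _ h2 hβ ih1 ih2
  · exact NSigma.falsum
  · exact NSigma.verum
  · exact fun n => NSigma.dAtom n
  · exact fun l => NSigma.fconj l
  · exact fun f _ ih => NSigma.one _ ih
  · exact fun α β φ ψ h2 hβ _ _ ih1 ih2 => NSigma.ge2b α β _ _ h2 hβ ih1 ih2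
  · exact fun α β φ ψ h2 hβ _ _ ih1 ih2 => NSigma.ge2a α β _ _ h2 hβ ih1 ih2

/-- Every `N-Σ_α`-definable set is `Σ⁰_{α ⊔ 1}`. -/
theorem sigma_sel {α : Ordinal} {φ : NForm} (h : NSigma α φ) :
    SelSigma (α ⊔ 1) {D | NSat D φ} := by
  refine NSigma.rec (motive_1 := fun α φ _ => SelSigma (α ⊔ 1) {D | NSat D φ})
    (motive_2 := fun α φ _ => SelSigma (α ⊔ 1) {D | NSat D φ}ᶜ)
    ?_ ?_ ?_ ?_ ?_ ?_ ?_ ?_ ?_ ?_ ?_ ?_ ?_ ?_ h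
  all_goals beta_reduce
  · simpa [NSat] using SelSigma.base _ scottOpen_univ
  · simpa [Set.eq_empty_iff_forall_notMem, NSat] using SelSigma.base _ scottOpen_empty
  · intro n
    have := SelSigma.base _ (scottOpen_fconj [n])
    simpa [NSat] using this
  · intro l
    simpa [NSat] using SelSigma.base _ (scottOpen_fconj l)
  · intro f _ ih
    have : {D | NSat D (NForm.disj f)} = ⋃ i, {D | NSat D (f i)} := by
      ext D; simp [NSat]
    rw [this]
    simpa using SelSigma.base _
      (scottOpen_iUnion fun i => selSigma_one_open (by simpa using ih i))
  · intro α β φ ψ h2 hβ _ _ ih1 ih2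
    rw [sup_one_eq h2]
    have : {D | NSat D (NForm.disj fun i => (φ i).cand (ψ i))} =
        ⋃ i, {D | NSat D (φ i)} \ {D | NSat D (ψ i)}ᶜ := by
      ext D; simp [NSat]
    rw [this]
    exact SelSigma.step α (fun i => β i ⊔ 1) _ _ (one_lt_of_two_le h2)
      (fun i => max_lt (hβ i) (one_lt_of_two_le h2)) ih1 ih2
  · intro α β φ ψ h2 hβ _ _ ih1 ih2
    rw [sup_one_eq h2]
    have : {D | NSat D (NForm.disj fun i => (φ i).cand (ψ i))} =
        ⋃ i, {D | NSat D (ψ i)} \ {D | NSat D (φ i)}ᶜ := by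
      ext D; simp [NSat, and_comm]
    rw [this]
    exact SelSigma.step α (fun i => β i ⊔ 1) _ _ (one_lt_of_two_le h2)
      (fun i => max_lt (hβ i) (one_lt_of_two_le h2)) ih2 ih1
  · simpa [Set.eq_empty_iff_forall_notMem, NSat] using SelSigma.base _ scottOpen_empty
  · have : {D | NSat D NForm.falsum}ᶜ = Set.univ := by
      ext D; simp [NSat]
    rw [this]; simpa using SelSigma.base _ scottOpen_univ
  · intro n
    have : {D | NSat D (NForm.ndAtom n)}ᶜ = {D | ∀ m ∈ [n], m ∈ D} := by
      ext D; simp [NSat]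
    rw [this]; simpa using SelSigma.base _ (scottOpen_fconj [n])
  · intro l
    have : {D | NSat D (NForm.fdisj l)}ᶜ = {D | ∀ n ∈ l, n ∈ D} := by
      ext D; simp [NSat]
    rw [this]; simpa using SelSigma.base _ (scottOpen_fconj l)
  · intro f _ ih
    have : {D | NSat D (NForm.conj f)}ᶜ = ⋃ i, {D | NSat D (f i)}ᶜ := by
      ext D; simp [NSat]
    rw [this]
    simpa using SelSigma.base _
      (scottOpen_iUnion fun i => selSigma_one_open (by simpa using ih i))
  · intro α β φ ψ h2 hβ _ _ ih1 ih2
    rw [sup_one_eq h2]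
    have : {D | NSat D (NForm.conj fun i => (φ i).cor (ψ i))}ᶜ =
        ⋃ i, {D | NSat D (ψ i)}ᶜ \ {D | NSat D (φ i)} := by
      ext D; simp [NSat, not_forall, not_or, and_comm]
    rw [this]
    exact SelSigma.step α (fun i => β i ⊔ 1) _ _ (one_lt_of_two_le h2)
      (fun i => max_lt (hβ i) (one_lt_of_two_le h2)) ih2 ih1
  · intro α β φ ψ h2 hβ _ _ ih1 ih2
    rw [sup_one_eq h2]
    have : {D | NSat D (NForm.conj fun i => (φ i).cor (ψ i))}ᶜ =
        ⋃ i, {D | NSat D (φ i)}ᶜ \ {D | NSat D (ψ i)} := by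
      ext D; simp [NSat, not_forall, not_or]
    rw [this]
    exact SelSigma.step α (fun i => β i ⊔ 1) _ _ (one_lt_of_two_le h2)
      (fun i => max_lt (hβ i) (one_lt_of_two_le h2)) ih1 ih2

/-- Every `Σ⁰_α` set is `N-Σ_α`-definable. -/
theorem sel_sigma {α : Ordinal} {X : Set (Set ℕ)} (h : SelSigma α X) :
    ∃ φ : NForm, NSigma α φ ∧ X = {D | NSat D φ} := by
  induction h with
  | base U hU =>
    classical
    refine ⟨NForm.disj fun i => if {D | ∀ n ∈ Denumerable.ofNat (List ℕ) i, n ∈ D} ⊆ U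
      then NForm.fconj (Denumerable.ofNat (List ℕ) i) else NForm.falsum, ?_, ?_⟩
    · refine NSigma.one _ fun i => ?_
      split
      · exact NSigma.fconj _
      · exact NSigma.falsum
    · ext X
      simp only [Set.mem_setOf_eq, NSat]
      constructor
      · intro hX
        obtain ⟨l, hl1, hl2⟩ := scott_finite_sub hU hX
        refine ⟨Encodable.encode l, ?_⟩
        rw [Denumerable.ofNat_encode]
        rw [if_pos hl2]
        exact hl1
      · rintro ⟨i, hi⟩
        by_cases hc : {D | ∀ n ∈ Denumerable.ofNat (List ℕ) i, n ∈ D} ⊆ U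
        · rw [if_pos hc] at hi
          exact hc hi
        · rw [if_neg hc] at hi
          exact hi.elim
  | step α β B B' h1 hβ hB hB' ih ih' =>
    classical
    choose φ hφ hφset using ih
    choose ψ hψ hψset using ih'
    refine ⟨NForm.disj fun i => (φ i).cand (ψ i).neg, ?_, ?_⟩
    · exact NSigma.ge2a α β _ _ (two_le_of_one_lt h1) hβ hφ fun i => nsigma_neg (hψ i)
    · ext D
      simp only [Set.mem_iUnion, Set.mem_diff, Set.mem_setOf_eq, NSat, sat_neg,
        hφset, hψset]

/-- Lopez–Escobar for the hierarchy on `2^ω`: for every countable `α ≥ 1`,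
a set is `Σ⁰_α` in Selivanov's hierarchy for the Scott topology iff it is
defined by an `N-Σ^p_α` formula, and dually for `Π⁰_α` and `N-Π^p_α`. -/
theorem selivanov_hierarchy_eq_NForm_definable (α : Ordinal)
    (hα : 1 ≤ α) (hcount : α.card ≤ Cardinal.aleph0) (X : Set (Set ℕ)) :
    (SelSigma α X ↔ ∃ φ : NForm, NSigma α φ ∧ X = {D | NSat D φ}) ∧
    ((∃ Y : Set (Set ℕ), SelSigma α Y ∧ X = Yᶜ) ↔
      ∃ φ : NForm, NPi α φ ∧ X = {D | NSat D φ}) := by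
  have hsup : α ⊔ 1 = α := sup_eq_left.mpr hα
  constructor
  · constructor
    · exact sel_sigma
    · rintro ⟨φ, hφ, rfl⟩
      have := sigma_sel hφ
      rwa [hsup] at this
  · constructor
    · rintro ⟨Y, hY, rfl⟩
      obtain ⟨ψ, hψ, rfl⟩ := sel_sigma hY
      refine ⟨ψ.neg, nsigma_neg hψ, ?_⟩
      ext D; simp [sat_neg]
    · rintro ⟨φ, hφ, rfl⟩
      refine ⟨{D | NSat D φ.neg}, ?_, ?_⟩
      · have := sigma_sel (npi_neg hφ); rwa [hsup] at this
      · ext D; simp [sat_neg]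

end LE
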